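/- arXiv:2301.09163 — 4 statements merged into one kernel-verified Lean document; each statement's English description precedes it below -/
import Mathlib

section
/- For every random variable W with E[ξ|W|] < +∞ and E[ξW] ≤ w, one has E[Z e^{−γW}] ≥ exp(−γw − E[ξ ln(ξ/Z)]). -/
open MeasureTheory Real
open scoped ENNReal

noncomputable section

/-- for every random variable `W` with `E[ξ|W|] < +∞` and `E[ξW] ≤ w`, one has
`E[Z e^{−γW}] ≥ exp(−γw − E[ξ ln(ξ/Z)])`.  (The left-hand side may be `+∞`, so it is
expressed as a lower Lebesgue integral.) -/
theorem stmt1 {Ω : Type*} [MeasurableSpace Ω] (μ : Measure Ω) [IsProbabilityMeasure μ]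
    (γ w : ℝ) (hγ : 0 < γ)
    (ξ : Ω → ℝ) (hξmeas : Measurable ξ) (hξpos : ∀ᵐ ω ∂μ, 0 < ξ ω)
    (hξint : Integrable ξ μ) (hξ1 : ∫ ω, ξ ω ∂μ = 1)
    (hξlnξ : Integrable (fun ω => ξ ω * Real.log (ξ ω)) μ)
    (Z : Ω → ℝ) (hZmeas : Measurable Z) (hZpos : ∀ᵐ ω ∂μ, 0 < Z ω)
    (hZint : Integrable Z μ) (hZ1 : ∫ ω, Z ω ∂μ = 1)
    (hξlnZ : Integrable (fun ω => ξ ω * |Real.log (Z ω)|) μ)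
    (W : Ω → ℝ) (hWmeas : Measurable W)
    (hWint : Integrable (fun ω => ξ ω * |W ω|) μ)
    (hbudget : ∫ ω, ξ ω * W ω ∂μ ≤ w) :
    ENNReal.ofReal (Real.exp (-γ * w - ∫ ω, ξ ω * Real.log (ξ ω / Z ω) ∂μ)) ≤
      ∫⁻ ω, ENNReal.ofReal (Z ω * Real.exp (-γ * W ω)) ∂μ := by
  set L : Ω → ℝ := fun ω => Real.log (Z ω) - Real.log (ξ ω) - γ * W ω with hL
  have hξlogZ : Integrable (fun ω => ξ ω * Real.log (Z ω)) μ := by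
    refine hξlnZ.mono' (hξmeas.mul hZmeas.log).aestronglyMeasurable ?_
    filter_upwards [hξpos] with ω hω
    rw [Real.norm_eq_abs, abs_mul, abs_of_pos hω]
  have hξW : Integrable (fun ω => ξ ω * W ω) μ := by
    refine hWint.mono' (hξmeas.mul hWmeas).aestronglyMeasurable ?_
    filter_upwards [hξpos] with ω hω
    rw [Real.norm_eq_abs, abs_mul, abs_of_pos hω]
  have hsplit : (fun ω => ξ ω * L ω)
      = fun ω => ξ ω * Real.log (Z ω) - ξ ω * Real.log (ξ ω) - γ * (ξ ω * W ω) := by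
    funext ω; rw [hL]; ring
  have hξL : Integrable (fun ω => ξ ω * L ω) μ := by
    rw [hsplit]; exact (hξlogZ.sub hξlnξ).sub (hξW.const_mul γ)
  set m := ∫ ω, ξ ω * L ω ∂μ with hm
  have hmval : m = (∫ ω, ξ ω * Real.log (Z ω) ∂μ) - (∫ ω, ξ ω * Real.log (ξ ω) ∂μ)
      - γ * ∫ ω, ξ ω * W ω ∂μ := by
    have hA : Integrable (fun ω => ξ ω * Real.log (Z ω) - ξ ω * Real.log (ξ ω)) μ :=
      hξlogZ.sub hξlnξ
    have hB : Integrable (fun ω => γ * (ξ ω * W ω)) μ := hξW.const_mul γ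
    rw [hm, hsplit, integral_sub hA hB, integral_sub hξlogZ hξlnξ, integral_const_mul]
  have hlogdiv : ∫ ω, ξ ω * Real.log (ξ ω / Z ω) ∂μ
      = (∫ ω, ξ ω * Real.log (ξ ω) ∂μ) - ∫ ω, ξ ω * Real.log (Z ω) ∂μ := by
    rw [← integral_sub hξlnξ hξlogZ]
    refine integral_congr_ae ?_
    filter_upwards [hξpos, hZpos] with ω h1 h2
    rw [Real.log_div h1.ne' h2.ne']; ring
  have hexp_le : -γ * w - ∫ ω, ξ ω * Real.log (ξ ω / Z ω) ∂μ ≤ m := by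
    rw [hlogdiv, hmval]
    have := mul_le_mul_of_nonneg_left hbudget hγ.le
    linarith
  set g : Ω → ℝ := fun ω => Real.exp m * (ξ ω + (ξ ω * L ω - m * ξ ω)) with hg
  have hgint : Integrable g μ := (hξint.add (hξL.sub (hξint.const_mul m))).const_mul _
  have hgval : ∫ ω, g ω ∂μ = Real.exp m := by
    have hC : Integrable (fun ω => m * ξ ω) μ := hξint.const_mul m
    have hD : Integrable (fun ω => ξ ω * L ω - m * ξ ω) μ := hξL.sub hC
    rw [hg, integral_const_mul, integral_add hξint hD, integral_sub hξL hC,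
      integral_const_mul, hξ1, ← hm]
    ring
  have hpt : ∀ᵐ ω ∂μ, g ω ≤ Z ω * Real.exp (-γ * W ω) := by
    filter_upwards [hξpos, hZpos] with ω h1 h2
    have hZe : Z ω * Real.exp (-γ * W ω) = ξ ω * Real.exp (L ω) := by
      rw [hL]
      simp only
      rw [Real.exp_sub, Real.exp_sub, Real.exp_log h2, Real.exp_log h1]
      have hee : Real.exp (-(γ * W ω)) * Real.exp (γ * W ω) = 1 := by
        rw [← Real.exp_add]; simp
      field_simp
      linear_combination hee
    have hkey : Real.exp m * (L ω - m + 1) ≤ Real.exp (L ω) := by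
      have h := Real.add_one_le_exp (L ω - m)
      calc Real.exp m * (L ω - m + 1)
          ≤ Real.exp m * Real.exp (L ω - m) :=
            mul_le_mul_of_nonneg_left h (Real.exp_pos m).le
        _ = Real.exp (L ω) := by rw [← Real.exp_add]; ring_nf
    rw [hZe, hg]
    calc Real.exp m * (ξ ω + (ξ ω * L ω - m * ξ ω))
        = ξ ω * (Real.exp m * (L ω - m + 1)) := by ring
      _ ≤ ξ ω * Real.exp (L ω) := mul_le_mul_of_nonneg_left hkey h1.le
  calc ENNReal.ofReal (Real.exp (-γ * w - ∫ ω, ξ ω * Real.log (ξ ω / Z ω) ∂μ))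
      ≤ ENNReal.ofReal (Real.exp m) := ENNReal.ofReal_le_ofReal (Real.exp_le_exp.mpr hexp_le)
    _ = ENNReal.ofReal (∫ ω, g ω ∂μ) := by rw [hgval]
    _ ≤ ENNReal.ofReal (∫ ω, max (g ω) 0 ∂μ) := by
        exact ENNReal.ofReal_le_ofReal
          (integral_mono hgint hgint.pos_part fun ω => le_max_left _ _)
    _ = ∫⁻ ω, ENNReal.ofReal (max (g ω) 0) ∂μ :=
        ofReal_integral_eq_lintegral_ofReal hgint.pos_part
          (Filter.Eventually.of_forall fun ω => le_max_right _ _)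
    _ = ∫⁻ ω, ENNReal.ofReal (g ω) ∂μ := by
        refine lintegral_congr fun ω => ?_
        rcases le_total (g ω) 0 with h | h
        · rw [max_eq_right h, ENNReal.ofReal_zero, ENNReal.ofReal_eq_zero.mpr h]
        · rw [max_eq_left h]
    _ ≤ ∫⁻ ω, ENNReal.ofReal (Z ω * Real.exp (-γ * W ω)) ∂μ := by
        refine lintegral_mono_ae ?_
        filter_upwards [hpt] with ω h using ENNReal.ofReal_le_ofReal h
end
end

section
/- The random variable W* := w − (1/γ)·ln(ξ/Z) + (1/γ)·E[ξ ln(ξ/Z)] satisfies E[ξ|W*|] < +∞ and E[ξW*] = w, and attains E[Z e^{−γW*}] = exp(−γw − E[ξ ln(ξ/Z)]). Hence W* is an optimal solution of the problem: maximize 1 − E[Z e^{−γW}] over all W with E[ξ|W|] < +∞ subject to E[ξW] ≤ w. -/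
open MeasureTheory Real
open scoped ENNReal

noncomputable section

/-- The candidate optimal terminal wealth
`W* = w − (1/γ)·ln(ξ/Z) + (1/γ)·E[ξ ln(ξ/Z)]`. -/
def Wstar {Ω : Type*} [MeasurableSpace Ω] (μ : Measure Ω) (γ w : ℝ) (ξ Z : Ω → ℝ)
    (ω : Ω) : ℝ :=
  w - (1 / γ) * Real.log (ξ ω / Z ω) + (1 / γ) * ∫ ω', ξ ω' * Real.log (ξ ω' / Z ω') ∂μ

/-- `W*` satisfies `E[ξ|W*|] < +∞`, `E[ξW*] = w`, attains
`E[Z e^{−γW*}] = exp(−γw − E[ξ ln(ξ/Z)])`, and is optimal: it maximizes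
`1 − E[Z e^{−γW}]` over all `W` with `E[ξ|W|] < +∞` subject to `E[ξW] ≤ w`
(equivalently it minimizes `E[Z e^{−γW}]`, expressed below via lower Lebesgue
integrals since `E[Z e^{−γW}]` may be infinite). -/
theorem stmt2 {Ω : Type*} [MeasurableSpace Ω] (μ : Measure Ω) [IsProbabilityMeasure μ]
    (γ w : ℝ) (hγ : 0 < γ)
    (ξ : Ω → ℝ) (hξmeas : Measurable ξ) (hξpos : ∀ᵐ ω ∂μ, 0 < ξ ω)
    (hξint : Integrable ξ μ) (hξ1 : ∫ ω, ξ ω ∂μ = 1)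
    (hξlnξ : Integrable (fun ω => ξ ω * Real.log (ξ ω)) μ)
    (Z : Ω → ℝ) (hZmeas : Measurable Z) (hZpos : ∀ᵐ ω ∂μ, 0 < Z ω)
    (hZint : Integrable Z μ) (hZ1 : ∫ ω, Z ω ∂μ = 1)
    (hξlnZ : Integrable (fun ω => ξ ω * |Real.log (Z ω)|) μ) :
    Integrable (fun ω => ξ ω * |Wstar μ γ w ξ Z ω|) μ ∧
    ∫ ω, ξ ω * Wstar μ γ w ξ Z ω ∂μ = w ∧
    ∫ ω, Z ω * Real.exp (-γ * Wstar μ γ w ξ Z ω) ∂μ =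
      Real.exp (-γ * w - ∫ ω, ξ ω * Real.log (ξ ω / Z ω) ∂μ) ∧
    ∀ W : Ω → ℝ, Measurable W → Integrable (fun ω => ξ ω * |W ω|) μ →
      ∫ ω, ξ ω * W ω ∂μ ≤ w →
      ∫⁻ ω, ENNReal.ofReal (Z ω * Real.exp (-γ * Wstar μ γ w ξ Z ω)) ∂μ ≤
        ∫⁻ ω, ENNReal.ofReal (Z ω * Real.exp (-γ * W ω)) ∂μ := by
  -- abbreviations
  set L : Ω → ℝ := fun ω => ξ ω * Real.log (ξ ω / Z ω) with hLdef
  have hLmeas : Measurable L :=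
    hξmeas.mul (Real.measurable_log.comp (hξmeas.div hZmeas))
  have hξlnZ' : Integrable (fun ω => ξ ω * Real.log (Z ω)) μ := by
    refine hξlnZ.mono' ?_ ?_
    · exact (hξmeas.mul (Real.measurable_log.comp hZmeas)).aestronglyMeasurable
    · filter_upwards [hξpos] with ω hω
      rw [Real.norm_eq_abs, abs_mul, abs_of_pos hω]
  have hLeq : L =ᵐ[μ] fun ω => ξ ω * Real.log (ξ ω) - ξ ω * Real.log (Z ω) := by
    filter_upwards [hξpos, hZpos] with ω h1 h2
    simp only [hLdef, Real.log_div h1.ne' h2.ne']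
    ring
  have hLint : Integrable L μ := ((hξlnξ.sub hξlnZ').congr hLeq.symm)
  set c : ℝ := ∫ ω, L ω ∂μ with hcdef
  have hWseq : ∀ ω, Wstar μ γ w ξ Z ω
      = w - (1 / γ) * Real.log (ξ ω / Z ω) + (1 / γ) * c := fun ω => rfl
  have hWsmeas : Measurable (Wstar μ γ w ξ Z) := by
    have : Wstar μ γ w ξ Z = fun ω =>
        w - (1 / γ) * Real.log (ξ ω / Z ω) + (1 / γ) * c := funext hWseq
    rw [this]
    exact (measurable_const.sub
      ((Real.measurable_log.comp (hξmeas.div hZmeas)).const_mul _)).add measurable_const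
  -- Part 1
  have hint1 : Integrable (fun ω => ξ ω * |Wstar μ γ w ξ Z ω|) μ := by
    have hgint : Integrable
        (fun ω => |w + (1 / γ) * c| * ξ ω + (1 / γ) * |L ω|) μ :=
      (hξint.const_mul _).add (hLint.abs.const_mul _)
    refine hgint.mono' ?_ ?_
    · exact (hξmeas.mul hWsmeas.abs).aestronglyMeasurable
    · filter_upwards [hξpos] with ω hω
      have habs : |Wstar μ γ w ξ Z ω|
          ≤ |w + (1 / γ) * c| + (1 / γ) * |Real.log (ξ ω / Z ω)| := by
        have h1 : Wstar μ γ w ξ Z ω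
            = (w + (1 / γ) * c) + (-(1 / γ)) * Real.log (ξ ω / Z ω) := by
          rw [hWseq ω]; ring
        rw [h1]
        refine (abs_add_le _ _).trans ?_
        rw [abs_mul, abs_neg, abs_of_pos (one_div_pos.mpr hγ)]
      have hLabs : |L ω| = ξ ω * |Real.log (ξ ω / Z ω)| := by
        simp only [hLdef, abs_mul, abs_of_pos hω]
      rw [Real.norm_eq_abs, abs_mul, abs_of_pos hω, abs_abs, hLabs]
      have := mul_le_mul_of_nonneg_left habs hω.le
      nlinarith [hω.le]
  -- Integrable ξ * Wstar
  have hξWs : Integrable (fun ω => ξ ω * Wstar μ γ w ξ Z ω) μ := by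
    refine hint1.mono' (hξmeas.mul hWsmeas).aestronglyMeasurable ?_
    filter_upwards [hξpos] with ω hω
    rw [Real.norm_eq_abs, abs_mul, abs_of_pos hω]
  -- Part 2
  have hpart2 : ∫ ω, ξ ω * Wstar μ γ w ξ Z ω ∂μ = w := by
    have hfun : (fun ω => ξ ω * Wstar μ γ w ξ Z ω)
        = fun ω => (w + (1 / γ) * c) * ξ ω - (1 / γ) * L ω := by
      funext ω
      rw [hWseq ω]
      simp only [hLdef]
      ring
    rw [hfun, integral_sub ((hξint.const_mul _)) (hLint.const_mul _),
      integral_const_mul, integral_const_mul, hξ1, ← hcdef, mul_one]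
    ring
  -- Part 3: a.e. identity
  have hKey : (fun ω => Z ω * Real.exp (-γ * Wstar μ γ w ξ Z ω))
      =ᵐ[μ] fun ω => ξ ω * Real.exp (-γ * w - c) := by
    filter_upwards [hξpos, hZpos] with ω h1 h2
    have h3 : -γ * Wstar μ γ w ξ Z ω = (-γ * w - c) + Real.log (ξ ω / Z ω) := by
      rw [hWseq ω]
      field_simp
      ring
    rw [h3, Real.exp_add, Real.exp_log (div_pos h1 h2)]
    field_simp
  have hpart3 : ∫ ω, Z ω * Real.exp (-γ * Wstar μ γ w ξ Z ω) ∂μ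
      = Real.exp (-γ * w - c) := by
    rw [integral_congr_ae hKey, integral_mul_const, hξ1, one_mul]
  refine ⟨hint1, hpart2, hpart3, ?_⟩
  -- Part 4: optimality
  intro W hWmeas hWabs hWbud
  set K : ℝ := Real.exp (-γ * w - c) with hKdef
  have hKpos : 0 < K := Real.exp_pos _
  have hξK : Integrable (fun ω => ξ ω * K) μ := hξint.mul_const K
  have hξKnn : 0 ≤ᵐ[μ] fun ω => ξ ω * K :=
    hξpos.mono fun ω h => mul_nonneg h.le hKpos.le
  have hLHS : ∫⁻ ω, ENNReal.ofReal (Z ω * Real.exp (-γ * Wstar μ γ w ξ Z ω)) ∂μ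
      = ENNReal.ofReal K := by
    rw [lintegral_congr_ae (hKey.mono fun ω h => congrArg ENNReal.ofReal h),
      ← ofReal_integral_eq_lintegral_ofReal hξK hξKnn,
      integral_mul_const, hξ1, one_mul]
  rw [hLHS]
  by_cases hfin : ∫⁻ ω, ENNReal.ofReal (Z ω * Real.exp (-γ * W ω)) ∂μ = ⊤
  · rw [hfin]; exact le_top
  have hfmeas : Measurable (fun ω => Z ω * Real.exp (-γ * W ω)) :=
    hZmeas.mul (Real.measurable_exp.comp ((measurable_const (a := -γ)).mul hWmeas))
  have hfnn : 0 ≤ᵐ[μ] fun ω => Z ω * Real.exp (-γ * W ω) :=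
    hZpos.mono fun ω h => mul_nonneg h.le (Real.exp_pos _).le
  have hfint : Integrable (fun ω => Z ω * Real.exp (-γ * W ω)) μ := by
    refine ⟨hfmeas.aestronglyMeasurable, ?_⟩
    rw [hasFiniteIntegral_iff_ofReal hfnn]
    exact lt_top_iff_ne_top.2 hfin
  rw [← ofReal_integral_eq_lintegral_ofReal hfint hfnn]
  apply ENNReal.ofReal_le_ofReal
  -- reduce to the real inequality K ≤ ∫ Z e^{-γW}
  have hξW : Integrable (fun ω => ξ ω * W ω) μ := by
    refine hWabs.mono' (hξmeas.mul hWmeas).aestronglyMeasurable ?_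
    filter_upwards [hξpos] with ω hω
    rw [Real.norm_eq_abs, abs_mul, abs_of_pos hω]
  set g : Ω → ℝ := fun ω => K * ξ ω + (γ * K) * (ξ ω * Wstar μ γ w ξ Z ω)
      - (γ * K) * (ξ ω * W ω) with hgdef
  have hA : Integrable (fun ω => K * ξ ω + γ * K * (ξ ω * Wstar μ γ w ξ Z ω)) μ :=
    (hξint.const_mul K).add (hξWs.const_mul (γ * K))
  have hB : Integrable (fun ω => γ * K * (ξ ω * W ω)) μ := hξW.const_mul (γ * K)
  have h1i : Integrable (fun ω => K * ξ ω) μ := hξint.const_mul K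
  have h2i : Integrable (fun ω => γ * K * (ξ ω * Wstar μ γ w ξ Z ω)) μ :=
    hξWs.const_mul (γ * K)
  have hgint : Integrable g μ := hA.sub hB
  have hpt : ∀ᵐ ω ∂μ, g ω ≤ Z ω * Real.exp (-γ * W ω) := by
    filter_upwards [hξpos, hZpos, hKey] with ω h1 h2 hk
    have e1 : -γ * W ω = -γ * Wstar μ γ w ξ Z ω
        + γ * (Wstar μ γ w ξ Z ω - W ω) := by ring
    rw [e1, Real.exp_add, ← mul_assoc, hk]
    have h4 := Real.add_one_le_exp (γ * (Wstar μ γ w ξ Z ω - W ω))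
    have h5 : 0 < ξ ω * K := mul_pos h1 hKpos
    simp only [hgdef]
    nlinarith
  have hInt : ∫ ω, g ω ∂μ ≤ ∫ ω, Z ω * Real.exp (-γ * W ω) ∂μ :=
    integral_mono_ae hgint hfint hpt
  have hg : ∫ ω, g ω ∂μ
      = K + γ * K * w - γ * K * ∫ ω, ξ ω * W ω ∂μ := by
    simp only [hgdef]
    rw [integral_sub hA hB, integral_add h1i h2i,
      integral_const_mul, integral_const_mul, integral_const_mul, hξ1, hpart2]
    ring
  have : K ≤ ∫ ω, g ω ∂μ := by
    rw [hg]
    nlinarith [mul_nonneg (mul_pos hγ hKpos).le (sub_nonneg.2 hWbud)]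
  linarith
end
end

section
/- Let ξ be a random variable with ξ > 0 a.s., E[ξ] = 1, E[ξ|ln ξ|] < +∞ and E[ξ|ln Z|] < +∞, and set W^r = w^r − (1/γ^r)ln ξ + (1/γ^r)E[ξ ln ξ] and W^g = w^g − (1/γ^g)ln(ξ/Z) + (1/γ^g)E[ξ ln(ξ/Z)]. Then there exists a constant c ∈ ℝ with W^r + W^g = X + c almost surely if and only if ξ = exp(ρ ln Z − γ*X) / E[exp(ρ ln Z − γ*X)] almost surely. -/
/-!
On `{ξ > 0, Z > 0}` the clearing condition is affine in `ln ξ`, `ln Z` and `X`. Since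
`γ* (1/γʳ + 1/γᵍ) = 1` and `γ*/γᵍ = ρ`, solving it for `ln ξ` shows that some `c` works exactly
when `ξ = k · exp(ρ ln Z − γ* X)` a.s. for a constant `k > 0`: here `k` is the exponential of an
affine function of `c`, so it ranges over all of `(0, ∞)`. The normalisation `E[ξ] = 1` then
forces `k = 1 / E[exp(ρ ln Z − γ* X)]`.
-/

open MeasureTheory Real

theorem ae_eq_div_integral_iff_exists_ae_eq_mul {α : Type*} [MeasurableSpace α] {μ : Measure α}
    {ξ f : α → ℝ} (hf : ∀ a, 0 ≤ f a) (hξ : ∫ a, ξ a ∂μ = 1) :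
    ξ =ᵐ[μ] (fun a => f a / ∫ a', f a' ∂μ) ↔ ∃ k > 0, ξ =ᵐ[μ] fun a => f a * k := by
  constructor
  · intro h
    have hI : ∫ a, f a ∂μ ≠ 0 := by
      intro h0
      simp only [h0, div_zero] at h
      simp [integral_congr_ae h] at hξ
    refine ⟨(∫ a, f a ∂μ)⁻¹, inv_pos.2 ((integral_nonneg hf).lt_of_ne' hI), ?_⟩
    simpa only [div_eq_mul_inv] using h
  · rintro ⟨k, -, h⟩
    have hk : (∫ a, f a ∂μ) * k = 1 := by
      rw [← integral_mul_const, ← integral_congr_ae h, hξ]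
    filter_upwards [h] with a ha
    rw [ha, eq_inv_of_mul_eq_one_right hk, div_eq_mul_inv]

theorem exists_exp_mul_sub_iff {γ : ℝ} (hγ : γ ≠ 0) (K : ℝ) (P : ℝ → Prop) :
    (∃ c, P (exp (γ * (K - c)))) ↔ ∃ k > 0, P k := by
  constructor
  · rintro ⟨c, hc⟩
    exact ⟨_, exp_pos _, hc⟩
  · rintro ⟨k, hk, hPk⟩
    refine ⟨K - log k / γ, ?_⟩
    rwa [sub_sub_cancel, mul_div_cancel₀ _ hγ, exp_log hk]

theorem pos_of_one_div_eq_one_div_add {γr γg γs : ℝ} (hγr : 0 < γr) (hγg : 0 < γg)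
    (hγs : 1 / γs = 1 / γr + 1 / γg) : 0 < γs :=
  one_div_pos.mp (hγs ▸ by positivity)

theorem wealth_sum_eq_iff_log_eq {γr γg γs ρ : ℝ} (hγr : 0 < γr) (hγg : 0 < γg)
    (hγs : 1 / γs = 1 / γr + 1 / γg) (hρ : ρ = γr / (γr + γg)) (wr wg A B L M x c : ℝ) :
    (wr - 1 / γr * L + 1 / γr * A) + (wg - 1 / γg * (L - M) + 1 / γg * B) = x + c ↔
      L = ρ * M - γs * x + γs * (wr + wg + A / γr + B / γg - c) := by
  have hsum : γs * (1 / γr + 1 / γg) = 1 := by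
    rw [← hγs, mul_one_div_cancel (pos_of_one_div_eq_one_div_add hγr hγg hγs).ne']
  have hρ' : ρ = γs / γg := by
    rw [hρ]
    field_simp at hsum ⊢
    linear_combination -hsum
  constructor <;> intro h
  · linear_combination (-γs) * h - L * hsum - M * hρ'
  · linear_combination (-(1 / γr + 1 / γg)) * h - (1 / γr + 1 / γg) * M * hρ' +
      (x - (wr + wg + A / γr + B / γg - c) - M / γg) * hsum

theorem stmt3_general {Ω : Type*} [MeasurableSpace Ω] (μ : Measure Ω)
    (γr γg wr wg γs ρ : ℝ) (hγr : 0 < γr) (hγg : 0 < γg)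
    (hγs : 1 / γs = 1 / γr + 1 / γg) (hρ : ρ = γr / (γr + γg))
    (Z : Ω → ℝ) (hZpos : ∀ᵐ ω ∂μ, 0 < Z ω)
    (X : Ω → ℝ)
    (ξ : Ω → ℝ) (hξpos : ∀ᵐ ω ∂μ, 0 < ξ ω)
    (hξ1 : ∫ ω, ξ ω ∂μ = 1) :
    (∃ c : ℝ, ∀ᵐ ω ∂μ,
        (wr - (1 / γr) * Real.log (ξ ω) + (1 / γr) * ∫ ω', ξ ω' * Real.log (ξ ω') ∂μ) +
        (wg - (1 / γg) * Real.log (ξ ω / Z ω)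
            + (1 / γg) * ∫ ω', ξ ω' * Real.log (ξ ω' / Z ω') ∂μ)
          = X ω + c) ↔
      ξ =ᵐ[μ] fun ω => Real.exp (ρ * Real.log (Z ω) - γs * X ω) /
        ∫ ω', Real.exp (ρ * Real.log (Z ω') - γs * X ω') ∂μ := by
  set f := fun ω => exp (ρ * log (Z ω) - γs * X ω)
  set K := wr + wg + (∫ ω, ξ ω * log (ξ ω) ∂μ) / γr + (∫ ω, ξ ω * log (ξ ω / Z ω) ∂μ) / γg
  have hclear : ∀ c, (∀ᵐ ω ∂μ,
      (wr - (1 / γr) * log (ξ ω) + (1 / γr) * ∫ ω', ξ ω' * log (ξ ω') ∂μ) +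
      (wg - (1 / γg) * log (ξ ω / Z ω) + (1 / γg) * ∫ ω', ξ ω' * log (ξ ω' / Z ω') ∂μ)
        = X ω + c) ↔ ξ =ᵐ[μ] fun ω => f ω * exp (γs * (K - c)) := fun c => by
    refine Filter.eventually_congr ?_
    filter_upwards [hξpos, hZpos] with ω hξω hZω
    rw [log_div hξω.ne' hZω.ne', wealth_sum_eq_iff_log_eq hγr hγg hγs hρ, ← exp_eq_exp,
      exp_log hξω, exp_add]
  simp_rw [hclear]
  rw [exists_exp_mul_sub_iff (pos_of_one_div_eq_one_div_add hγr hγg hγs).ne' K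
    (fun k => ξ =ᵐ[μ] fun ω => f ω * k)]
  exact (ae_eq_div_integral_iff_exists_ae_eq_mul (fun _ => (exp_pos _).le) hξ1).symm

/-- market clearing characterization. With
`W^r = w^r − (1/γ^r)ln ξ + (1/γ^r)E[ξ ln ξ]` and
`W^g = w^g − (1/γ^g)ln(ξ/Z) + (1/γ^g)E[ξ ln(ξ/Z)]`, there is a constant `c` with
`W^r + W^g = X + c` a.s. iff `ξ = exp(ρ ln Z − γ*X)/E[exp(ρ ln Z − γ*X)]` a.s. -/
theorem stmt3 {Ω : Type*} [MeasurableSpace Ω] (μ : Measure Ω) [IsProbabilityMeasure μ]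
    (γr γg wr wg γs ρ : ℝ) (hγr : 0 < γr) (hγg : 0 < γg)
    (hγs : 1 / γs = 1 / γr + 1 / γg) (hρ : ρ = γr / (γr + γg))
    (Z : Ω → ℝ) (hZmeas : Measurable Z) (hZpos : ∀ᵐ ω ∂μ, 0 < Z ω)
    (hZint : Integrable Z μ) (hZ1 : ∫ ω, Z ω ∂μ = 1)
    (X : Ω → ℝ) (hXmeas : Measurable X)
    (hexpint : Integrable (fun ω => Real.exp (ρ * Real.log (Z ω) - γs * X ω)) μ)
    (ξ : Ω → ℝ) (hξmeas : Measurable ξ) (hξpos : ∀ᵐ ω ∂μ, 0 < ξ ω)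
    (hξint : Integrable ξ μ) (hξ1 : ∫ ω, ξ ω ∂μ = 1)
    (hξlnξ : Integrable (fun ω => ξ ω * |Real.log (ξ ω)|) μ)
    (hξlnZ : Integrable (fun ω => ξ ω * |Real.log (Z ω)|) μ)
    (hξX : Integrable (fun ω => ξ ω * |X ω|) μ) :
    (∃ c : ℝ, ∀ᵐ ω ∂μ,
        (wr - (1 / γr) * Real.log (ξ ω) + (1 / γr) * ∫ ω', ξ ω' * Real.log (ξ ω') ∂μ) +
        (wg - (1 / γg) * Real.log (ξ ω / Z ω)
            + (1 / γg) * ∫ ω', ξ ω' * Real.log (ξ ω' / Z ω') ∂μ)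
          = X ω + c) ↔
      ξ =ᵐ[μ] fun ω => Real.exp (ρ * Real.log (Z ω) - γs * X ω) /
        ∫ ω', Real.exp (ρ * Real.log (Z ω') - γs * X ω') ∂μ :=
  stmt3_general μ γr γg wr wg γs ρ hγr hγg hγs hρ Z hZpos X ξ hξpos hξ1
end

section
/- Let p ≥ 2 be a real number, C ≥ 0, and let (ε_k)_{k≥0} be a sequence of nonnegative real numbers satisfying ε_{k+1} ≤ ((k+p−2)/(k+p))·ε_k + 4C/(k+p)² for all k ≥ 0. Then for every k ≥ 0 one has ε_k ≤ 4C/(k+p) + K/(k+p)², where K = p²·(ε_0 − 4C/p)⁺. In particular ε_k = O(1/k) as k → ∞. -/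
open Filter

lemma stmt18_key (C K t : ℝ) (hC : 0 ≤ C) (hK : 0 ≤ K) (ht : 2 ≤ t) :
    (t - 2) / t * (4 * C / t + K / t ^ 2) + 4 * C / t ^ 2
      ≤ 4 * C / (t + 1) + K / (t + 1) ^ 2 := by
  have h0 : 0 < t := by linarith
  have h1 : 0 < t + 1 := by linarith
  have e1 : (t - 2) / t * (4 * C / t + K / t ^ 2) + 4 * C / t ^ 2
      = (4 * C * (t - 1) * t + K * (t - 2)) / t ^ 3 := by
    field_simp
    ring
  have e2 : 4 * C / (t + 1) + K / (t + 1) ^ 2 = (4 * C * (t + 1) + K) / (t + 1) ^ 2 := by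
    field_simp
  rw [e1, e2, div_le_div_iff₀ (by positivity) (by positivity)]
  have h0' : (0:ℝ) ≤ t := h0.le
  nlinarith [mul_nonneg (mul_nonneg hK h0') h0', mul_nonneg hK h0',
    mul_nonneg (mul_nonneg hC h0') h0', mul_nonneg hC h0', mul_pos h0 h0]

/-- the real-analytic recursion estimate underlying the convergence proof of
the generalized conditional gradient algorithm. If `ε_{k+1} ≤ ((k+p−2)/(k+p))·ε_k + 4C/(k+p)²`
for all `k`, then `ε_k ≤ 4C/(k+p) + K/(k+p)²` with `K = p²·(ε₀ − 4C/p)⁺`; in particular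
`ε_k = O(1/k)`. -/
theorem stmt18 (p C : ℝ) (hp : 2 ≤ p) (hC : 0 ≤ C)
    (ε : ℕ → ℝ) (hε : ∀ k, 0 ≤ ε k)
    (hrec : ∀ k : ℕ, ε (k + 1) ≤ ((k + p - 2) / (k + p)) * ε k + 4 * C / (k + p) ^ 2) :
    (∀ k : ℕ, ε k ≤ 4 * C / (k + p) + (p ^ 2 * max (ε 0 - 4 * C / p) 0) / (k + p) ^ 2) ∧
    (fun k : ℕ => ε k) =O[atTop] (fun k : ℕ => 1 / (k : ℝ)) := by
  set K : ℝ := p ^ 2 * max (ε 0 - 4 * C / p) 0 with hKdef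
  have hp0 : (0:ℝ) < p := by linarith
  have hK : 0 ≤ K := by positivity
  have main : ∀ k : ℕ, ε k ≤ 4 * C / (k + p) + K / (k + p) ^ 2 := by
    intro k
    induction k with
    | zero =>
      simp only [Nat.cast_zero, zero_add]
      have h1 : ε 0 - 4 * C / p ≤ max (ε 0 - 4 * C / p) 0 := le_max_left _ _
      have h2 : K / p ^ 2 = max (ε 0 - 4 * C / p) 0 := by
        rw [hKdef]; field_simp
      linarith [h2 ▸ h1]
    | succ k ih =>
      have ht : (2:ℝ) ≤ (k:ℝ) + p := by
        have : (0:ℝ) ≤ (k:ℝ) := Nat.cast_nonneg k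
        linarith
      have h0 : (0:ℝ) < (k:ℝ) + p := by linarith
      have hmul : ((k:ℝ) + p - 2) / ((k:ℝ) + p) * ε k
          ≤ ((k:ℝ) + p - 2) / ((k:ℝ) + p) * (4 * C / ((k:ℝ) + p) + K / ((k:ℝ) + p) ^ 2) :=
        mul_le_mul_of_nonneg_left ih (div_nonneg (by linarith) (le_of_lt h0))
      have hkey := stmt18_key C K ((k:ℝ) + p) hC hK ht
      have := hrec k
      push_cast
      calc ε (k + 1) ≤ ((k:ℝ) + p - 2) / ((k:ℝ) + p) * ε k + 4 * C / ((k:ℝ) + p) ^ 2 := this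
        _ ≤ ((k:ℝ) + p - 2) / ((k:ℝ) + p) * (4 * C / ((k:ℝ) + p) + K / ((k:ℝ) + p) ^ 2)
            + 4 * C / ((k:ℝ) + p) ^ 2 := by linarith
        _ ≤ 4 * C / ((k:ℝ) + p + 1) + K / ((k:ℝ) + p + 1) ^ 2 := hkey
        _ = 4 * C / ((k:ℝ) + 1 + p) + K / ((k:ℝ) + 1 + p) ^ 2 := by ring_nf
  refine ⟨main, ?_⟩
  rw [Asymptotics.isBigO_iff]
  refine ⟨4 * C + K, eventually_atTop.mpr ⟨1, fun k hk => ?_⟩⟩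
  have hk1 : (1:ℝ) ≤ (k:ℝ) := by exact_mod_cast hk
  have h0 : (0:ℝ) < (k:ℝ) + p := by linarith
  have h2 : (2:ℝ) ≤ (k:ℝ) + p := by linarith
  rw [Real.norm_eq_abs, Real.norm_eq_abs, abs_of_nonneg (hε k),
    abs_of_nonneg (by positivity : (0:ℝ) ≤ 1 / (k:ℝ))]
  have hb := main k
  have h3 : 4 * C / ((k:ℝ) + p) ≤ 4 * C / (k:ℝ) :=
    div_le_div_of_nonneg_left (by linarith) (by linarith) (by linarith)
  have h4 : K / ((k:ℝ) + p) ^ 2 ≤ K / (k:ℝ) := by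
    apply div_le_div_of_nonneg_left hK (by linarith)
    nlinarith
  calc ε k ≤ 4 * C / ((k:ℝ) + p) + K / ((k:ℝ) + p) ^ 2 := hb
    _ ≤ 4 * C / (k:ℝ) + K / (k:ℝ) := by linarith
    _ = (4 * C + K) * (1 / (k:ℝ)) := by field_simp
end
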